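/- arXiv:1704.07016 — 3 statements merged into one kernel-verified Lean document; each statement's English description precedes it below -/
import Mathlib

section
/- In the pLSI topic model, let Π = [diag(ξ_1)]^{-1} M_0^{-1/2} A · diag(V_1) ∈ R^{p×K}. Then each row π_j' of Π is a weight vector (nonnegative entries summing to 1), and R = Π V*. Consequently, each row r_j of R is the convex combination r_j = Σ_{k=1}^K π_j(k) v_k* of the rows v_1*, …, v_K* of V*, so r_j lies in the simplex with vertices v_1*, …, v_K*; moreover, if word j is an anchor word for topic k (i.e., row j of A has exactly one nonzero entry, located in column k), then r_j = v_k*. -/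
noncomputable section
open Filter MeasureTheory ProbabilityTheory Matrix Finset Real
open scoped Classical

namespace TopicModel

/-- Euclidean norm of a vector given by a function. -/
def enorm {m : Type*} [Fintype m] (x : m → ℝ) : ℝ := Real.sqrt (∑ i, (x i) ^ 2)

/-- ℓ¹-norm of a vector given by a function. -/
def l1norm {m : Type*} [Fintype m] (x : m → ℝ) : ℝ := ∑ i, |x i|

/-- A probability (weight) vector: nonnegative entries summing to 1. -/
def IsProbVec {m : Type*} [Fintype m] (v : m → ℝ) : Prop :=
  (∀ i, 0 ≤ v i) ∧ ∑ i, v i = 1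

/-- All columns of a matrix are probability vectors. -/
def ColsProb {p K : ℕ} (A : Matrix (Fin p) (Fin K) ℝ) : Prop :=
  ∀ k, IsProbVec fun j => A j k

/-- `h_j`: the ℓ¹ norm of the j-th row of `A`. -/
def rowL1 {p K : ℕ} (A : Matrix (Fin p) (Fin K) ℝ) (j : Fin p) : ℝ := ∑ k, |A j k|

/-- The diagonal of `diag(n⁻¹ D 1_n)`. -/
def diagAvg {p n : ℕ} (D : Matrix (Fin p) (Fin n) ℝ) (j : Fin p) : ℝ :=
  (n : ℝ)⁻¹ * ∑ i, D j i

/-- `M^{-1/2} D` for a diagonal normalization `Mdg`. -/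
def nrm {p n : ℕ} (D : Matrix (Fin p) (Fin n) ℝ) (Mdg : Fin p → ℝ) :
    Matrix (Fin p) (Fin n) ℝ :=
  Matrix.of fun j i => (Real.sqrt (Mdg j))⁻¹ * D j i

/-- Spectral norm of a (rectangular) matrix. -/
def specNorm {p n : ℕ} (B : Matrix (Fin p) (Fin n) ℝ) : ℝ :=
  ⨆ x : {x : Fin n → ℝ // ∑ i, (x i) ^ 2 ≤ 1}, enorm (B *ᵥ x.1)

/-- A family of vectors is orthonormal. -/
def OrthonormalRows {K : ℕ} {p : Type*} [Fintype p] (u : Fin K → p → ℝ) : Prop :=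
  ∀ k l, ∑ j, u k j * u l j = if k = l then (1 : ℝ) else 0

/-- `(lam k, u k)` are eigenpairs of `G`, with orthonormal eigenvectors. -/
def IsEigenPairs {p K : ℕ} (G : Matrix (Fin p) (Fin p) ℝ)
    (lam : Fin K → ℝ) (u : Fin K → Fin p → ℝ) : Prop :=
  OrthonormalRows u ∧ ∀ k, G *ᵥ u k = lam k • u k

/-- `xi` consists of the `K` leading (unit-norm) eigenvectors of `G`: the first `K`
vectors of a full orthonormal eigenbasis whose eigenvalues are in decreasing order. -/
def LeadingEigenvectors {p K : ℕ} (hKp : K ≤ p) (G : Matrix (Fin p) (Fin p) ℝ)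
    (xi : Fin K → Fin p → ℝ) : Prop :=
  ∃ (lam : Fin p → ℝ) (u : Fin p → Fin p → ℝ),
    IsEigenPairs G lam u ∧ Antitone lam ∧ ∀ k : Fin K, xi k = u (Fin.castLE hKp k)

/-- `xi` consists of the `K` leading left singular vectors of `B`,
i.e. the `K` leading eigenvectors of `B Bᵀ`. -/
def LeadingLeftSingVecs {p n K : ℕ} (hKp : K ≤ p) (B : Matrix (Fin p) (Fin n) ℝ)
    (xi : Fin K → Fin p → ℝ) : Prop :=
  LeadingEigenvectors hKp (B * Bᵀ) xi

/-- `λ_min(S) ≥ c`, expressed through the quadratic form. -/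
def lamMinGe {K : ℕ} (S : Matrix (Fin K) (Fin K) ℝ) (c : ℝ) : Prop :=
  ∀ x : Fin K → ℝ, c * ∑ k, (x k) ^ 2 ≤ x ⬝ᵥ (S *ᵥ x)

/-- The topic-topic concurrence matrix `Σ_W = n⁻¹ W W'`. -/
def SigmaW {K n : ℕ} (W : Matrix (Fin K) (Fin n) ℝ) : Matrix (Fin K) (Fin K) ℝ :=
  (n : ℝ)⁻¹ • (W * Wᵀ)

/-- The topic-topic correlation matrix `Σ_A = A' H⁻¹ A`. -/
def SigmaA {p K : ℕ} (A : Matrix (Fin p) (Fin K) ℝ) : Matrix (Fin K) (Fin K) ℝ :=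
  Aᵀ * (Matrix.diagonal fun j => (rowL1 A j)⁻¹) * A

/-- The matrix `Σ̃_A = A' M₀⁻¹ A`. -/
def SigmaAt {p K n : ℕ} (A : Matrix (Fin p) (Fin K) ℝ) (W : Matrix (Fin K) (Fin n) ℝ) :
    Matrix (Fin K) (Fin K) ℝ :=
  Aᵀ * (Matrix.diagonal fun j => (diagAvg (A * W) j)⁻¹) * A

/-- All the singular values of the square matrix `S` are pairwise at least `c` apart. -/
def SingValGapGe {K : ℕ} (S : Matrix (Fin K) (Fin K) ℝ) (c : ℝ) : Prop :=
  ∃ (s : Fin K → ℝ) (v : Fin K → Fin K → ℝ),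
    (∀ k, 0 ≤ s k) ∧ IsEigenPairs (Sᵀ * S) (fun k => (s k) ^ 2) v ∧
    ∀ k l, k ≠ l → c ≤ |s k - s l|

/-- Regularity conditions (R1)-(R2). -/
def Reg12 {p K n : ℕ} (A : Matrix (Fin p) (Fin K) ℝ) (W : Matrix (Fin K) (Fin n) ℝ)
    (c1 c2 : ℝ) : Prop :=
  ColsProb A ∧ ColsProb W ∧ (∀ j, 0 < rowL1 A j) ∧
  lamMinGe (SigmaW W) c1 ∧ lamMinGe (SigmaA A) c1 ∧
  (∀ k l, c1 ≤ SigmaA A k l) ∧ SingValGapGe (SigmaW W * SigmaAt A W) c2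

/-- `j` is an anchor word for topic `k`. -/
def IsAnchor {p K : ℕ} (A : Matrix (Fin p) (Fin K) ℝ) (j : Fin p) (k : Fin K) : Prop :=
  A j k ≠ 0 ∧ ∀ l, l ≠ k → A j l = 0

/-- Regularity condition (R3): each topic has at least `mp` anchor words, each of
frequency at least `δp`. -/
def Reg3 {p K : ℕ} (A : Matrix (Fin p) (Fin K) ℝ) (mp : ℕ) (δp : ℝ) : Prop :=
  ∀ k, (mp ≤ Set.ncard {j | IsAnchor A j k}) ∧
    ∀ j, IsAnchor A j k → δp ≤ rowL1 A j

/-- `ã_j = a_j / h_j`: the ℓ¹-normalized `j`-th row of `A`. -/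
def tildeRow {p K : ℕ} (A : Matrix (Fin p) (Fin K) ℝ) (j : Fin p) (k : Fin K) : ℝ :=
  A j k / rowL1 A j

/-- Whether `j` is a non-anchor word. -/
def NonAnchor {p K : ℕ} (A : Matrix (Fin p) (Fin K) ℝ) (j : Fin p) : Prop :=
  ¬ ∃ k, IsAnchor A j k

/-- The k-means loss `RSS_n(L)` associated with the `ã_j` of non-anchor words. -/
def RSS {p K : ℕ} (A : Matrix (Fin p) (Fin K) ℝ) (L : ℕ) : ℝ :=
  ⨅ η : Fin L → Fin K → ℝ,
    ∑ j ∈ Finset.univ.filter (fun j => NonAnchor A j),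
      ⨅ l : Fin L, ∑ k, (tildeRow A j k - η l k) ^ 2

/-- Regularity condition (R4). -/
def Reg4 {p K : ℕ} (A : Matrix (Fin p) (Fin K) ℝ) (c3 : ℝ) (L0 mp n : ℕ) : Prop :=
  (∀ j, NonAnchor A j → ∀ k : Fin K,
      c3 ≤ enorm (fun l => tildeRow A j l - if l = k then 1 else 0)) ∧
  RSS A L0 ≤ (mp : ℝ) / Real.log n

/-- The empirical word-frequency matrix `D` built from the words `X i m` of the
`n` documents (each of length `N`). -/
def empD {p n N : ℕ} (X : Fin n → Fin N → Fin p) : Matrix (Fin p) (Fin n) ℝ :=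
  Matrix.of fun j i => (N : ℝ)⁻¹ * ∑ m, if X i m = j then (1 : ℝ) else 0

/-- The pLSI sampling model: the words `X ω i m` (word `m` of document `i`) are
independent across all `(i,m)`, and word `m` of document `i` equals `j` with
probability `D0 j i`.  This is exactly the statement that the columns of the
empirical frequency matrix are independent with `N dᵢ ~ Multinomial(N, d⁰ᵢ)`. -/
def IsPLSIWords {Ω : Type*} [MeasurableSpace Ω] (μ : Measure Ω)
    {p n N : ℕ} (D0 : Matrix (Fin p) (Fin n) ℝ)
    (X : Ω → Fin n → Fin N → Fin p) : Prop :=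
  IsProbabilityMeasure μ ∧
  (∀ i m, Measurable fun ω => X ω i m) ∧
  iIndepFun (fun (im : Fin n × Fin N) ω => X ω im.1 im.2) μ ∧
  ∀ i m j, (μ {ω | X ω i m = j}).toReal = D0 j i

/-- Sign vectors (diagonal ±1 matrices). -/
def SignVec (K : ℕ) : Type := {ω : Fin K → ℝ // ∀ k, ω k = 1 ∨ ω k = -1}

instance (K : ℕ) : Nonempty (SignVec K) := ⟨⟨fun _ => 1, fun _ => Or.inl rfl⟩⟩

/-- `Δ₁(Z, D₀) = min_{Ω ∈ O_K} max_j h_j^{-1/2} ‖Ω Ξ̂_j - Ξ_j‖`. -/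
def Delta1 {p K : ℕ} (hA : Fin p → ℝ) (xihat xi : Fin K → Fin p → ℝ) : ℝ :=
  ⨅ ω : SignVec K, ⨆ j, (Real.sqrt (hA j))⁻¹ * enorm (fun k => ω.1 k * xihat k j - xi k j)

/-- `Δ₂(Z, D₀) = max_j h_j⁻¹ |M(j,j) - M₀(j,j)|`. -/
def Delta2 {p : ℕ} (hA : Fin p → ℝ) (Md M0d : Fin p → ℝ) : ℝ :=
  ⨆ j, (hA j)⁻¹ * |Md j - M0d j|

/-- The matrix of entry-wise eigen-ratios: `R(j,t) = ξ_{t+1}(j) / ξ_1(j)`. -/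
def ratioR {p K : ℕ} (xi : Fin (K + 1) → Fin p → ℝ) (j : Fin p) (t : Fin K) : ℝ :=
  xi t.succ j / xi 0 j

/-- `V*(ℓ,t) = V_{t+1}(ℓ) / V_1(ℓ)`. -/
def VstarOf {K : ℕ} (V : Matrix (Fin (K + 1)) (Fin (K + 1)) ℝ) (l : Fin (K + 1))
    (t : Fin K) : ℝ :=
  V l t.succ / V l 0

/-- The k-means objective with centers `θ`. -/
def kmeansObj {p K L : ℕ} (r : Fin p → Fin K → ℝ) (θ : Fin L → Fin K → ℝ) : ℝ :=
  ∑ j, ⨅ l : Fin L, ∑ t, (r j t - θ l t) ^ 2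

/-- Euclidean distance from `b` to the simplex with vertices `vs 0, …, vs K`. -/
def simplexDist {K : ℕ} (b : Fin K → ℝ) (vs : Fin (K + 1) → Fin K → ℝ) : ℝ :=
  ⨅ w : {w : Fin (K + 1) → ℝ // IsProbVec w},
    enorm (fun t => b t - ∑ k, w.1 k * vs k t)

/-- The max distance of a center to the simplex spanned by the selected centers. -/
def maxSimplexDist {K L : ℕ} (θ : Fin L → Fin K → ℝ) (s : Fin (K + 1) → Fin L) : ℝ :=
  ⨆ l, simplexDist (θ l) fun k => θ (s k)

/-- Specification of the two-stage Vertices Hunting algorithm: `θ` is a global optimum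
of the k-means objective with `L` clusters, and `s` selects `K+1` affinely independent
cluster centers minimizing the maximal distance of a center to their simplex. -/
def VHSpec {p K L : ℕ} (r : Fin p → Fin K → ℝ) (θ : Fin L → Fin K → ℝ)
    (s : Fin (K + 1) → Fin L) : Prop :=
  (∀ θ' : Fin L → Fin K → ℝ, kmeansObj r θ ≤ kmeansObj r θ') ∧
  Function.Injective s ∧ AffineIndependent ℝ (fun k => θ (s k)) ∧
  ∀ s' : Fin (K + 1) → Fin L, Function.Injective s' →
    AffineIndependent ℝ (fun k => θ (s' k)) →
      maxSimplexDist θ s ≤ maxSimplexDist θ s'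

/-- The barycentric-coordinates step: `π*_j` solves the linear system given by the
estimated vertices. -/
def BarySpec {p K : ℕ} (r : Fin p → Fin K → ℝ) (v : Fin (K + 1) → Fin K → ℝ)
    (pistar : Fin p → Fin (K + 1) → ℝ) : Prop :=
  ∀ j, (∑ k, pistar j k = 1) ∧ ∀ t, ∑ k, pistar j k * v k t = r j t

/-- Truncate negative entries to zero and renormalize to unit sum. -/
def truncNorm {K : ℕ} (x : Fin K → ℝ) : Fin K → ℝ :=
  fun k => max (x k) 0 / ∑ l, max (x l) 0

/-- The final Topic-SCORE output `Â`: form `Â* = M^{1/2} diag(ξ̂₁) Π̂` and normalize each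
column to unit ℓ¹-norm. -/
def AhatOf {p K : ℕ} (Ddiag : Fin p → ℝ) (xihat : Fin (K + 1) → Fin p → ℝ)
    (pihat : Fin p → Fin (K + 1) → ℝ) : Matrix (Fin p) (Fin (K + 1)) ℝ :=
  Matrix.of fun j k =>
    (Real.sqrt (Ddiag j) * xihat 0 j * pihat j k) /
      ∑ j', |Real.sqrt (Ddiag j') * xihat 0 j' * pihat j' k|

/-- Full specification of the Topic-SCORE estimator (with `t = ∞`) applied to data `D`. -/
def TopicScoreSpec {p n K L : ℕ} (hKp : K + 1 ≤ p) (D : Matrix (Fin p) (Fin n) ℝ)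
    (xihat : Fin (K + 1) → Fin p → ℝ) (θ : Fin L → Fin K → ℝ) (s : Fin (K + 1) → Fin L)
    (pistar : Fin p → Fin (K + 1) → ℝ) (Ahat : Matrix (Fin p) (Fin (K + 1)) ℝ) : Prop :=
  LeadingLeftSingVecs hKp (nrm D (diagAvg D)) xihat ∧
  VHSpec (ratioR xihat) θ s ∧
  BarySpec (ratioR xihat) (fun k => θ (s k)) pistar ∧
  Ahat = AhatOf (diagAvg D) xihat fun j => truncNorm (pistar j)

/-- The ℓ¹ estimation loss `L(Â, A)`, minimized over permutations of the topics. -/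
def TVLoss {p K : ℕ} (Ahat A : Matrix (Fin p) (Fin K) ℝ) : ℝ :=
  ⨅ κ : Equiv.Perm (Fin K), ∑ k, ∑ j, |Ahat j (κ k) - A j k|

/-! If `u = w ᵥ* V` with `w ≥ 0` and the first column of `V` positive, then
`u t / u 0 = ∑ k, π k * (V k t / V k 0)` with barycentric weights `π k = w k * V k 0 / u 0`,
which are nonnegative and sum to one. Applied to the row `w = M₀(j,j)^{-1/2} a_j` of
`M₀^{-1/2} A` and `u = (ξ_1(j), …, ξ_K(j))`, these weights are exactly the entries of the
row `π_j` of `Π`, so `r_j` is the convex combination of the rows of `V*`; for an anchor word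
`w` is supported on one topic and the combination collapses to a vertex. -/

section BarycentricRatios

variable {κ μ : Type*} [Fintype κ] (w : κ → ℝ) (V : Matrix κ μ ℝ)

theorem sum_mul_div_vecMul_eq_one {c : μ} (hc : (w ᵥ* V) c ≠ 0) :
    ∑ k, w k * V k c / (w ᵥ* V) c = 1 := by
  rw [← Finset.sum_div]
  exact div_self hc

theorem vecMul_div_eq_sum_mul_div {c : μ} (hV : ∀ k, V k c ≠ 0) (d : μ) :
    (w ᵥ* V) d / (w ᵥ* V) c = ∑ k, w k * V k c / (w ᵥ* V) c * (V k d / V k c) := by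
  simp only [vecMul, dotProduct, Finset.sum_div]
  refine Finset.sum_congr rfl fun k _ => ?_
  field_simp [hV k]

theorem vecMul_div_eq_of_single {k : κ} (hw : ∀ l, l ≠ k → w l = 0) {c : μ}
    (hc : (w ᵥ* V) c ≠ 0) (d : μ) : (w ᵥ* V) d / (w ᵥ* V) c = V k d / V k c := by
  have hsingle : ∀ e, (w ᵥ* V) e = w k * V k e := fun e =>
    Finset.sum_eq_single k (fun l _ hl => by rw [hw l hl, zero_mul]) (by simp)
  rw [hsingle] at hc ⊢
  rw [hsingle, mul_div_mul_left _ _ (left_ne_zero_of_mul hc)]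

end BarycentricRatios

theorem sum_smul_mem_convexHull_range {ι E : Type*} [Fintype ι] [AddCommGroup E] [Module ℝ E]
    {a : ι → ℝ} (ha : IsProbVec a) (v : ι → E) :
    ∑ k, a k • v k ∈ convexHull ℝ (Set.range v) :=
  (convex_convexHull ℝ _).sum_mem (fun k _ => ha.1 k) ha.2
    fun k _ => subset_convexHull ℝ _ (Set.mem_range_self k)

theorem nrm_mul_apply {p n m : ℕ} (A : Matrix (Fin p) (Fin n) ℝ) (d : Fin p → ℝ)
    (V : Matrix (Fin n) (Fin m) ℝ) (j : Fin p) (k : Fin m) :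
    (nrm A d * V) j k = (((Real.sqrt (d j))⁻¹ • A j) ᵥ* V) k := by
  simp only [nrm, mul_apply, of_apply, vecMul, dotProduct, _root_.Pi.smul_apply, smul_eq_mul,
    mul_assoc]

theorem statement_0_general
    (K : ℕ) (c1 c2 : ℝ) (p n : ℕ)
    (A : Matrix (Fin p) (Fin (K + 1)) ℝ) (W : Matrix (Fin (K + 1)) (Fin n) ℝ)
    (hreg : Reg12 A W c1 c2)
    (xi : Fin (K + 1) → Fin p → ℝ)
    (hxi1pos : ∀ j, 0 < xi 0 j)
    (V : Matrix (Fin (K + 1)) (Fin (K + 1)) ℝ)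
    (hVeq : (Matrix.of fun j k => xi k j) = nrm A (diagAvg (A * W)) * V)
    (hV1pos : ∀ k, 0 < V k 0)
    (Pi : Fin p → Fin (K + 1) → ℝ)
    (hPi : ∀ j k, Pi j k = (xi 0 j)⁻¹ * (Real.sqrt (diagAvg (A * W) j))⁻¹ * A j k * V k 0) :
    (∀ j, IsProbVec (Pi j)) ∧
    (∀ j t, ratioR xi j t = ∑ k, Pi j k * VstarOf V k t) ∧
    (∀ j, (fun t => ratioR xi j t) ∈
      convexHull ℝ (Set.range fun k => fun t => VstarOf V k t)) ∧
    (∀ j k, IsAnchor A j k → ∀ t, ratioR xi j t = VstarOf V k t) := by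
  obtain ⟨hAcols, -⟩ := hreg
  set w : Fin p → Fin (K + 1) → ℝ := fun j => (Real.sqrt (diagAvg (A * W) j))⁻¹ • A j
  have hxi_row : ∀ j k, xi k j = (w j ᵥ* V) k := fun j k =>
    (congrFun (congrFun hVeq j) k).trans (nrm_mul_apply _ _ _ _ _)
  have hratio_row : ∀ j t, ratioR xi j t = (w j ᵥ* V) t.succ / (w j ᵥ* V) 0 := fun j t => by
    rw [ratioR, hxi_row, hxi_row]
  have hPi_row : ∀ j k, Pi j k = w j k * V k 0 / (w j ᵥ* V) 0 := fun j k => by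
    rw [hPi, ← hxi_row]
    simp only [w, _root_.Pi.smul_apply, smul_eq_mul]
    ring
  have hprob : ∀ j, IsProbVec (Pi j) := fun j => by
    refine ⟨fun k => ?_, ?_⟩
    · have := (hAcols k).1 j
      have := hxi1pos j
      have := hV1pos k
      rw [hPi]
      positivity
    · simp only [hPi_row]
      exact sum_mul_div_vecMul_eq_one _ _ (hxi_row j 0 ▸ (hxi1pos j).ne')
  have hcomb : ∀ j t, ratioR xi j t = ∑ k, Pi j k * VstarOf V k t := fun j t => by
    simp only [hratio_row, hPi_row, VstarOf]
    exact vecMul_div_eq_sum_mul_div _ _ (fun k => (hV1pos k).ne') _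
  refine ⟨hprob, hcomb, fun j => ?_, fun j k hjk t => ?_⟩
  · convert sum_smul_mem_convexHull_range (hprob j) fun k t => VstarOf V k t using 1
    ext t
    simp only [hcomb, Finset.sum_apply, _root_.Pi.smul_apply, smul_eq_mul]
  · have hw : ∀ l, l ≠ k → w j l = 0 := fun l hl => by simp [w, hjk.2 l hl]
    rw [hratio_row, vecMul_div_eq_of_single _ _ hw (hxi_row j 0 ▸ (hxi1pos j).ne'), VstarOf]

/-- Lemma "Ideal Simplex".  In the pLSI topic model (with `K+1` topics),
let `Π = [diag(ξ₁)]⁻¹ M₀^{-1/2} A diag(V₁)`.  Then every row of `Π` is a weight vector,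
`R = Π V*`, each row `r_j` of `R` is the corresponding convex combination of the rows
`v₁*, …, v_K*` of `V*` (hence lies in their simplex), and anchor rows fall exactly on
the corresponding vertex. -/
theorem statement_0
    (K : ℕ) (hK : 1 ≤ K) (c1 c2 : ℝ) (hc1 : 0 < c1) (hc1' : c1 < 1) (hc2 : 0 < c2)
    (p n : ℕ) (hp : K + 1 ≤ p) (hn : 0 < n)
    (A : Matrix (Fin p) (Fin (K + 1)) ℝ) (W : Matrix (Fin (K + 1)) (Fin n) ℝ)
    (hreg : Reg12 A W c1 c2)
    (hanchor : ∀ k, ∃ j, IsAnchor A j k)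
    (xi : Fin (K + 1) → Fin p → ℝ)
    (hxi : LeadingLeftSingVecs hp (nrm (A * W) (diagAvg (A * W))) xi)
    (hxi1pos : ∀ j, 0 < xi 0 j)
    (V : Matrix (Fin (K + 1)) (Fin (K + 1)) ℝ) (hV : IsUnit V.det)
    (hVeq : (Matrix.of fun j k => xi k j) = nrm A (diagAvg (A * W)) * V)
    (hV1pos : ∀ k, 0 < V k 0)
    (Pi : Fin p → Fin (K + 1) → ℝ)
    (hPi : ∀ j k, Pi j k = (xi 0 j)⁻¹ * (Real.sqrt (diagAvg (A * W) j))⁻¹ * A j k * V k 0) :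
    (∀ j, IsProbVec (Pi j)) ∧
    (∀ j t, ratioR xi j t = ∑ k, Pi j k * VstarOf V k t) ∧
    (∀ j, (fun t => ratioR xi j t) ∈
      convexHull ℝ (Set.range fun k => fun t => VstarOf V k t)) ∧
    (∀ j k, IsAnchor A j k → ∀ t, ratioR xi j t = VstarOf V k t) :=
  statement_0_general K c1 c2 p n A W hreg xi hxi1pos V hVeq hV1pos Pi hPi

end TopicModel
end
end

section
/- Element-wise eigenvector perturbation. Let G and G_0 be p×p real symmetric matrices, where G_0 has rank K. For 1 ≤ k ≤ K let (λ_k, u_k) be the k-th eigenpair of G_0 (λ_k the k-th eigenvalue with unit-norm eigenvector u_k), and let (λ̂_k, û_k) be the k-th eigenpair of G. Let E = G − G_0 with j-th row E_j'. Suppose for some a ∈ (0,1): min_{1≤k≤K} |λ_k| ≥ a‖G_0‖, min_{1≤k≤K−1} |λ_k − λ_{k+1}| ≥ a‖G_0‖, and ‖E‖ ≤ (a/2)‖G_0‖, where ‖·‖ is the spectral norm. Then there exist signs ω_1,…,ω_K ∈ {±1} such that for all 1 ≤ j ≤ p, max_{1≤k≤K} |ω_k û_k(j) − u_k(j)| ≤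 (C(a,K)/‖G_0‖)·( ‖E‖·Σ_{ℓ=1}^K |u_ℓ(j)| + ‖E_j‖ ), where C(a,K) > 0 is a constant depending only on a and K. -/
noncomputable section
open Filter MeasureTheory ProbabilityTheory Matrix Finset Real
open scoped Classical

namespace TopicModel

/-! Expand a unit eigenvector `v = û_k` of `G` in the eigenbasis `u0` of `G0`. With `E = G - G0`,
its coefficients satisfy `(λ̂_k - λ_l) ⟪u_l, v⟫ = ⟪u_l, E v⟫`. Weyl's inequality and the gap
assumptions keep `λ̂_k` at distance `≥ a‖G0‖/2` from every `λ_l`, `l ≠ k`, including the kernel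
eigenvalues `λ_l = 0`, `l ≥ K`. So the leading coefficients `l ≠ k` contribute at most
`‖E‖ Σ_l |u_l(j)|` to coordinate `j`, up to the factor `2/(a‖G0‖)`. The kernel part of `v` is
`λ̂_k⁻¹` times the kernel part of `E v`, whose `j`-th coordinate is `⟪E_j, v⟫` minus the leading
components; this is where `‖E_j‖` enters. Finally Parseval gives
`1 - |⟪u_k, v⟫| ≤ 2‖E‖/(a‖G0‖)`, and `ω_k` is the sign of `⟪u_k, v⟫`; so `C = 6/a` works. -/

section Norms

variable {m : Type*} [Fintype m]

lemma enorm_nonneg (x : m → ℝ) : 0 ≤ enorm x := Real.sqrt_nonneg _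

lemma sq_enorm (x : m → ℝ) : enorm x ^ 2 = ∑ i, x i ^ 2 :=
  Real.sq_sqrt (by positivity)

lemma sq_enorm_eq_dotProduct (x : m → ℝ) : enorm x ^ 2 = x ⬝ᵥ x := by
  rw [sq_enorm]; simp only [dotProduct, sq]

lemma enorm_smul (c : ℝ) (x : m → ℝ) : enorm (c • x) = |c| * enorm x := by
  simp only [enorm, Pi.smul_apply, smul_eq_mul, mul_pow, ← Finset.mul_sum]
  rw [Real.sqrt_mul (sq_nonneg c), Real.sqrt_sq_eq_abs]

lemma abs_apply_le_enorm (x : m → ℝ) (i : m) : |x i| ≤ enorm x := by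
  rw [← Real.sqrt_sq_eq_abs]
  exact Real.sqrt_le_sqrt (Finset.single_le_sum (fun j _ => sq_nonneg (x j)) (Finset.mem_univ i))

lemma abs_dotProduct_le (x y : m → ℝ) : |x ⬝ᵥ y| ≤ enorm x * enorm y := by
  rw [← Real.sqrt_sq_eq_abs, enorm, enorm, ← Real.sqrt_mul (by positivity)]
  exact Real.sqrt_le_sqrt (Finset.sum_mul_sq_le_sq_mul_sq _ x y)

end Norms

section SpecNorm

variable {p n : ℕ}

lemma specNorm_bddAbove (B : Matrix (Fin p) (Fin n) ℝ) :
    BddAbove (Set.range fun x : {x : Fin n → ℝ // ∑ i, x i ^ 2 ≤ 1} => enorm (B *ᵥ x.1)) := by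
  refine ⟨√(∑ i, enorm (B i) ^ 2), ?_⟩
  rintro _ ⟨⟨x, hx⟩, rfl⟩
  have hx1 : enorm x ≤ 1 := Real.sqrt_le_one.mpr hx
  refine Real.sqrt_le_sqrt (Finset.sum_le_sum fun i _ => ?_)
  rw [← sq_abs]
  refine pow_le_pow_left₀ (abs_nonneg _) ?_ 2
  calc |(B *ᵥ x) i| ≤ enorm (B i) * enorm x := abs_dotProduct_le _ _
    _ ≤ enorm (B i) := mul_le_of_le_one_right (enorm_nonneg _) hx1

lemma specNorm_nonneg (B : Matrix (Fin p) (Fin n) ℝ) : 0 ≤ specNorm B :=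
  (enorm_nonneg _).trans (le_ciSup (specNorm_bddAbove B) ⟨0, by simp⟩)

lemma enorm_mulVec_le (B : Matrix (Fin p) (Fin n) ℝ) (x : Fin n → ℝ) :
    enorm (B *ᵥ x) ≤ specNorm B * enorm x := by
  rcases (enorm_nonneg x).eq_or_lt with hx | hx
  · have : x = 0 := by
      rw [← dotProduct_self_eq_zero, ← sq_enorm_eq_dotProduct, ← hx, sq, zero_mul]
    simp [this, enorm]
  · have hunit : ∑ i, ((enorm x)⁻¹ • x) i ^ 2 ≤ 1 := by
      rw [← sq_enorm, enorm_smul, abs_inv, abs_of_pos hx, inv_mul_cancel₀ hx.ne', one_pow]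
    have := le_ciSup (specNorm_bddAbove B) ⟨_, hunit⟩
    rw [Matrix.mulVec_smul, enorm_smul, abs_inv, abs_of_pos hx, inv_mul_le_iff₀ hx] at this
    exact this.trans_eq (mul_comm _ _)

lemma abs_dotProduct_mulVec_le (B : Matrix (Fin p) (Fin p) ℝ) (x : Fin p → ℝ) :
    |x ⬝ᵥ (B *ᵥ x)| ≤ specNorm B * (x ⬝ᵥ x) := by
  calc |x ⬝ᵥ (B *ᵥ x)| ≤ enorm x * (specNorm B * enorm x) :=
        (abs_dotProduct_le _ _).trans (by gcongr; exacts [enorm_nonneg _, enorm_mulVec_le B x])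
    _ = specNorm B * (x ⬝ᵥ x) := by rw [← sq_enorm_eq_dotProduct]; ring

lemma specNorm_pos {B : Matrix (Fin p) (Fin n) ℝ} (hB : B ≠ 0) : 0 < specNorm B := by
  obtain ⟨i, j, hij⟩ : ∃ i j, B i j ≠ 0 := by
    by_contra! h
    exact hB (Matrix.ext h)
  calc 0 < |B i j| := abs_pos.mpr hij
    _ ≤ enorm (B *ᵥ Pi.single j 1) := by
        simpa [Matrix.mulVec_single] using abs_apply_le_enorm (B *ᵥ Pi.single j 1) i
    _ ≤ specNorm B * enorm (Pi.single j (1 : ℝ)) := enorm_mulVec_le _ _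
    _ = specNorm B := by simp [enorm, Pi.single_apply]

end SpecNorm

lemma abs_sum_mul_le_of_abs_le {ι : Type*} (s : Finset ι) {a b : ι → ℝ} {ε : ℝ}
    (ha : ∀ i ∈ s, |a i| ≤ ε) : |∑ i ∈ s, a i * b i| ≤ ε * ∑ i ∈ s, |b i| := by
  rw [Finset.mul_sum]
  refine (Finset.abs_sum_le_sum_abs _ _).trans (Finset.sum_le_sum fun i hi => ?_)
  rw [abs_mul]
  exact mul_le_mul_of_nonneg_right (ha i hi) (abs_nonneg _)

lemma abs_one_sub_abs_le_of_sum_sq {ι : Type*} [Fintype ι] [DecidableEq ι] {c w : ι → ℝ} {k : ι}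
    {δ ε : ℝ} (hδ : 0 < δ) (hε : 0 ≤ ε) (hc : ∑ l, c l ^ 2 = 1) (hw : ∑ l, w l ^ 2 ≤ ε ^ 2)
    (hfar : ∀ l ≠ k, δ * |c l| ≤ |w l|) : |(1 - |c k|)| ≤ ε / δ := by
  have hrest : δ ^ 2 * (1 - c k ^ 2) ≤ ε ^ 2 := by
    rw [← hc, ← Finset.add_sum_erase _ _ (Finset.mem_univ k), add_sub_cancel_left,
      Finset.mul_sum]
    refine le_trans ?_ ((Finset.sum_le_sum_of_subset_of_nonneg (Finset.erase_subset k _)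
      fun l _ _ => sq_nonneg (w l)).trans hw)
    refine Finset.sum_le_sum fun l hl => ?_
    rw [← mul_pow, ← sq_abs (δ * c l), ← sq_abs (w l), abs_mul, abs_of_pos hδ]
    exact pow_le_pow_left₀ (by positivity) (hfar l (Finset.ne_of_mem_erase hl)) 2
  have hck : |c k| ≤ 1 := by
    rw [← sq_le_one_iff_abs_le_one, ← hc]
    exact Finset.single_le_sum (fun l _ => sq_nonneg (c l)) (Finset.mem_univ k)
  rw [abs_of_nonneg (sub_nonneg.mpr hck), le_div_iff₀ hδ,
    ← pow_le_pow_iff_left₀ (mul_nonneg (sub_nonneg.mpr hck) hδ.le) hε two_ne_zero]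
  nlinarith [sq_abs (c k), mul_nonneg (mul_nonneg (sub_nonneg.2 hck) (abs_nonneg (c k))) (sq_nonneg δ)]

lemma abs_mul_sub_le_of_mul_eq_abs {ω c x y : ℝ} (hω : |ω| = 1) (hωc : ω * c = |c|) :
    |ω * x - y| ≤ |x - c * y| + |(1 - |c|)| * |y| := by
  calc |ω * x - y| = |ω * (x - c * y) + -((1 - |c|) * y)| := by rw [← hωc]; ring_nf
    _ ≤ |x - c * y| + |(1 - |c|)| * |y| := by
        refine (abs_add_le _ _).trans_eq ?_
        rw [abs_neg, abs_mul, abs_mul, hω, one_mul]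

lemma half_le_abs_sub_of_le_abs_sub {x y z b : ℝ} (hxz : b ≤ |x - z|) (hxy : |y - x| ≤ b / 2) :
    b / 2 ≤ |y - z| := by
  linarith [abs_sub_le x y z, abs_sub_comm x y]

section Gaps

variable {p K : ℕ} (hKp : K ≤ p) {f : Fin p → ℝ}

include hKp in
lemma eq_zero_of_card_ne_zero_le (hcard : Fintype.card {l // f l ≠ 0} ≤ K)
    (hne : ∀ k : Fin K, f (Fin.castLE hKp k) ≠ 0) {l : Fin p} (hl : K ≤ (l : ℕ)) : f l = 0 := by
  by_contra hfl
  have hsub : insert l ({i | (i : ℕ) < K} : Finset (Fin p)) ⊆ ({i | f i ≠ 0} : Finset _) := by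
    intro i hi
    rcases Finset.mem_insert.mp hi with rfl | hi
    · simpa using hfl
    · exact Finset.mem_filter.mpr ⟨Finset.mem_univ _, hne ⟨i, by simpa using hi⟩⟩
  have := Finset.card_le_card hsub
  rw [Finset.card_insert_of_notMem (by simpa using hl), Fin.card_filter_val_lt,
    ← Fintype.card_subtype] at this
  omega

include hKp in
lemma le_sub_of_consecutive_gaps (hf : Antitone f) {b : ℝ}
    (hgap : ∀ k : Fin K, ∀ h : (k : ℕ) + 1 < K,
      b ≤ |f (Fin.castLE hKp k) - f ⟨(k : ℕ) + 1, lt_of_lt_of_le h hKp⟩|)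
    {k l : Fin p} (hkl : k < l) (hl : (l : ℕ) < K) : b ≤ f k - f l := by
  have hk1 : (k : ℕ) + 1 < K := lt_of_le_of_lt hkl hl
  have := hgap ⟨k, by omega⟩ hk1
  have hmid : f l ≤ f ⟨(k : ℕ) + 1, lt_of_lt_of_le hk1 hKp⟩ := hf (Fin.le_def.mpr hkl)
  have hstep : f ⟨(k : ℕ) + 1, lt_of_lt_of_le hk1 hKp⟩ ≤ f k := hf (Fin.le_def.mpr (by simp))
  rw [abs_of_nonneg (by simpa using hstep)] at this
  simp only [Fin.castLE_mk, Fin.eta] at this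
  linarith

include hKp in
lemma le_abs_sub_of_consecutive_gaps (hf : Antitone f) {b : ℝ}
    (hgap : ∀ k : Fin K, ∀ h : (k : ℕ) + 1 < K,
      b ≤ |f (Fin.castLE hKp k) - f ⟨(k : ℕ) + 1, lt_of_lt_of_le h hKp⟩|)
    (hmag : ∀ k : Fin K, b ≤ |f (Fin.castLE hKp k)|) (hzero : ∀ l : Fin p, K ≤ (l : ℕ) → f l = 0)
    (k : Fin K) {l : Fin p} (hl : l ≠ Fin.castLE hKp k) : b ≤ |f (Fin.castLE hKp k) - f l| := by
  by_cases hlK : (l : ℕ) < K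
  · rcases hl.lt_or_gt with hlk | hkl
    · rw [abs_sub_comm]
      exact (le_sub_of_consecutive_gaps hKp hf hgap hlk k.2).trans (le_abs_self _)
    · exact (le_sub_of_consecutive_gaps hKp hf hgap hkl hlK).trans (le_abs_self _)
  · rw [hzero l (not_lt.mp hlK), sub_zero]
    exact hmag k

end Gaps

lemma exists_ne_zero_forall_dotProduct_eq_zero {ι : Type*} [Fintype ι] {p : ℕ}
    (v : ι → Fin p → ℝ) (hcard : Fintype.card ι < p) :
    ∃ x : Fin p → ℝ, x ≠ 0 ∧ ∀ l, v l ⬝ᵥ x = 0 := by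
  have hker : LinearMap.ker (Matrix.of v).mulVecLin ≠ ⊥ :=
    LinearMap.ker_ne_bot_of_finrank_lt (by simpa using hcard)
  obtain ⟨x, hx, hx0⟩ := (Submodule.ne_bot_iff _).mp hker
  exact ⟨x, hx0, fun l => congrFun (LinearMap.mem_ker.mp hx) l⟩

namespace OrthonormalRows

variable {p : ℕ} {u : Fin p → Fin p → ℝ}

lemma mul_transpose_eq_one (hu : OrthonormalRows u) : Matrix.of u * (Matrix.of u)ᵀ = 1 := by
  ext k l
  simpa [Matrix.mul_apply, Matrix.one_apply] using hu k l

lemma transpose_mul_eq_one (hu : OrthonormalRows u) : (Matrix.of u)ᵀ * Matrix.of u = 1 :=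
  mul_eq_one_comm.mp hu.mul_transpose_eq_one

lemma sum_dotProduct_smul (hu : OrthonormalRows u) (x : Fin p → ℝ) :
    ∑ k, (u k ⬝ᵥ x) • u k = x := by
  have := congrArg (· *ᵥ x) hu.transpose_mul_eq_one
  simp only [← Matrix.mulVec_mulVec, Matrix.one_mulVec, Matrix.mulVec_transpose] at this
  refine Eq.trans ?_ this
  ext j
  simp [Matrix.vecMul, dotProduct, Matrix.mulVec, Finset.sum_apply, mul_comm]

lemma sum_sq_dotProduct (hu : OrthonormalRows u) (x : Fin p → ℝ) :
    ∑ k, (u k ⬝ᵥ x) ^ 2 = x ⬝ᵥ x := by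
  nth_rewrite 3 [← hu.sum_dotProduct_smul x]
  simp [dotProduct_comm x, sum_dotProduct, smul_dotProduct, sq]

lemma enorm_dotProduct (hu : OrthonormalRows u) (x : Fin p → ℝ) :
    enorm (fun k => u k ⬝ᵥ x) = enorm x := by
  rw [← sq_eq_sq₀ (enorm_nonneg _) (enorm_nonneg _), sq_enorm, sq_enorm_eq_dotProduct,
    hu.sum_sq_dotProduct]

lemma apply_eq_sum (hu : OrthonormalRows u) (x : Fin p → ℝ) (j : Fin p) :
    x j = ∑ l, (u l ⬝ᵥ x) * u l j := by
  conv_lhs => rw [← hu.sum_dotProduct_smul x]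
  simp

variable {v e : Fin p → ℝ} {T : Finset (Fin p)} {μ δ ε : ℝ}

lemma abs_sum_compl_le (hu : OrthonormalRows u) (hδ : 0 < δ) (hμ : δ ≤ |μ|)
    (he : ∀ l, |u l ⬝ᵥ e| ≤ ε) (hker : ∀ l ∉ T, μ * (u l ⬝ᵥ v) = u l ⬝ᵥ e) (j : Fin p) :
    |∑ l ∈ Tᶜ, (u l ⬝ᵥ v) * u l j| ≤ (|e j| + ε * ∑ l ∈ T, |u l j|) / δ := by
  have hsplit : μ * ∑ l ∈ Tᶜ, (u l ⬝ᵥ v) * u l j = e j - ∑ l ∈ T, (u l ⬝ᵥ e) * u l j := by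
    rw [hu.apply_eq_sum e j, ← Finset.sum_add_sum_compl T, add_sub_cancel_left, Finset.mul_sum]
    refine Finset.sum_congr rfl fun l hl => ?_
    rw [← hker l (Finset.mem_compl.mp hl), mul_assoc]
  rw [le_div_iff₀ hδ, mul_comm]
  calc δ * |∑ l ∈ Tᶜ, (u l ⬝ᵥ v) * u l j| ≤ |μ| * |∑ l ∈ Tᶜ, (u l ⬝ᵥ v) * u l j| := by gcongr
    _ = |e j - ∑ l ∈ T, (u l ⬝ᵥ e) * u l j| := by rw [← abs_mul, hsplit]
    _ ≤ |e j| + ε * ∑ l ∈ T, |u l j| :=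
        (abs_sub _ _).trans (add_le_add le_rfl (abs_sum_mul_le_of_abs_le T fun l _ => he l))

lemma abs_apply_sub_le (hu : OrthonormalRows u) {k : Fin p} (hk : k ∈ T) (hδ : 0 < δ)
    (hμ : δ ≤ |μ|) (he : ∀ l, |u l ⬝ᵥ e| ≤ ε)
    (hfar : ∀ l ≠ k, δ * |u l ⬝ᵥ v| ≤ |u l ⬝ᵥ e|)
    (hker : ∀ l ∉ T, μ * (u l ⬝ᵥ v) = u l ⬝ᵥ e) (j : Fin p) :
    |v j - (u k ⬝ᵥ v) * u k j| ≤ (2 * ε * ∑ l ∈ T, |u l j| + |e j|) / δ := by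
  have hsplit : v j - (u k ⬝ᵥ v) * u k j
      = ∑ l ∈ T.erase k, (u l ⬝ᵥ v) * u l j + ∑ l ∈ Tᶜ, (u l ⬝ᵥ v) * u l j := by
    rw [hu.apply_eq_sum v j, ← Finset.sum_add_sum_compl T, ← Finset.add_sum_erase T _ hk]
    ring
  have hnear : |∑ l ∈ T.erase k, (u l ⬝ᵥ v) * u l j| ≤ ε / δ * ∑ l ∈ T, |u l j| := by
    refine (abs_sum_mul_le_of_abs_le (ε := ε / δ) _ fun l hl => ?_).trans ?_
    · rw [le_div_iff₀ hδ, mul_comm]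
      exact (hfar l (Finset.ne_of_mem_erase hl)).trans (he l)
    · gcongr
      · exact div_nonneg ((abs_nonneg _).trans (he k)) hδ.le
      · exact Finset.erase_subset k T
  rw [hsplit]
  calc _ ≤ ε / δ * ∑ l ∈ T, |u l j| + (|e j| + ε * ∑ l ∈ T, |u l j|) / δ :=
        (abs_add_le _ _).trans (add_le_add hnear (hu.abs_sum_compl_le hδ hμ he hker j))
    _ = _ := by ring

end OrthonormalRows

namespace IsEigenPairs

variable {p : ℕ} {G : Matrix (Fin p) (Fin p) ℝ} {lam : Fin p → ℝ} {u : Fin p → Fin p → ℝ}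

lemma dotProduct_mulVec_self (h : IsEigenPairs G lam u) (x : Fin p → ℝ) :
    x ⬝ᵥ (G *ᵥ x) = ∑ l, lam l * (u l ⬝ᵥ x) ^ 2 := by
  nth_rewrite 2 [← h.1.sum_dotProduct_smul x]
  simp [Matrix.mulVec_sum, Matrix.mulVec_smul, h.2, dotProduct_comm x, sum_dotProduct,
    smul_dotProduct, sq, mul_left_comm]

lemma rank_eq_card (h : IsEigenPairs G lam u) : G.rank = Fintype.card {l // lam l ≠ 0} := by
  set U := Matrix.of u
  have hGU : G = Uᵀ * Matrix.diagonal lam * U := by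
    have hcols : G * Uᵀ = Uᵀ * Matrix.diagonal lam := by
      ext j k
      simpa [U, Matrix.mul_apply, Matrix.mulVec, dotProduct, Matrix.diagonal_apply, mul_comm]
        using congrFun (h.2 k) j
    rw [← hcols, Matrix.mul_assoc, h.1.transpose_mul_eq_one, Matrix.mul_one]
  have hU : IsUnit U.det := Matrix.isUnit_det_of_right_inverse h.1.mul_transpose_eq_one
  rw [hGU, Matrix.rank_mul_eq_left_of_isUnit_det _ _ hU,
    Matrix.rank_mul_eq_right_of_isUnit_det _ _ (by rwa [Matrix.det_transpose]),
    Matrix.rank_diagonal]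

lemma mul_dotProduct_self_le (h : IsEigenPairs G lam u) (hm : Antitone lam) {i : Fin p}
    {x : Fin p → ℝ} (hx : ∀ l, i < l → u l ⬝ᵥ x = 0) :
    lam i * (x ⬝ᵥ x) ≤ x ⬝ᵥ (G *ᵥ x) := by
  rw [h.dotProduct_mulVec_self, ← h.1.sum_sq_dotProduct, Finset.mul_sum]
  refine Finset.sum_le_sum fun l _ => ?_
  rcases lt_or_ge i l with hil | hli
  · simp [hx l hil]
  · exact mul_le_mul_of_nonneg_right (hm hli) (sq_nonneg _)

lemma dotProduct_mulVec_self_le (h : IsEigenPairs G lam u) (hm : Antitone lam) {i : Fin p}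
    {x : Fin p → ℝ} (hx : ∀ l, l < i → u l ⬝ᵥ x = 0) :
    x ⬝ᵥ (G *ᵥ x) ≤ lam i * (x ⬝ᵥ x) := by
  rw [h.dotProduct_mulVec_self, ← h.1.sum_sq_dotProduct, Finset.mul_sum]
  refine Finset.sum_le_sum fun l _ => ?_
  rcases lt_or_ge l i with hli | hil
  · simp [hx l hli]
  · exact mul_le_mul_of_nonneg_right (hm hil) (sq_nonneg _)

variable {G0 : Matrix (Fin p) (Fin p) ℝ} {lam0 : Fin p → ℝ} {u0 : Fin p → Fin p → ℝ}

/- Courant–Fischer: a nonzero `x` orthogonal to `u (i+1), …` and to `u0 0, …, u0 (i-1)` exists by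
counting dimensions, and its Rayleigh quotients for `G` and `G0` straddle `lam i` and `lam0 i`. -/
lemma le_add_of_dotProduct_mulVec_sub_le (h : IsEigenPairs G lam u) (hm : Antitone lam)
    (h0 : IsEigenPairs G0 lam0 u0) (h0m : Antitone lam0) {ε : ℝ}
    (hE : ∀ x, x ⬝ᵥ ((G - G0) *ᵥ x) ≤ ε * (x ⬝ᵥ x)) (i : Fin p) :
    lam i ≤ lam0 i + ε := by
  obtain ⟨x, hx0, hx⟩ := exists_ne_zero_forall_dotProduct_eq_zero
    (fun l : {l // l ≠ i} => if (l : Fin p) < i then u0 l else u l)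
    (by simpa using Fintype.card_subtype_lt (p := fun l : Fin p => l ≠ i) (not_not.mpr rfl))
  have hG := h.mul_dotProduct_self_le hm (x := x) (i := i) fun l hil => by
    simpa [not_lt_of_gt hil] using hx ⟨l, hil.ne'⟩
  have hG0 := h0.dotProduct_mulVec_self_le h0m (x := x) (i := i) fun l hli => by
    simpa [hli] using hx ⟨l, hli.ne⟩
  have hxx : 0 < x ⬝ᵥ x :=
    (Fintype.sum_nonneg fun j => mul_self_nonneg (x j)).lt_of_ne
      (Ne.symm (dotProduct_self_eq_zero.not.mpr hx0))
  have hsplit : x ⬝ᵥ (G *ᵥ x) = x ⬝ᵥ (G0 *ᵥ x) + x ⬝ᵥ ((G - G0) *ᵥ x) := by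
    simp [Matrix.sub_mulVec, dotProduct_sub]
  have : lam i * (x ⬝ᵥ x) ≤ (lam0 i + ε) * (x ⬝ᵥ x) := by linarith [hE x]
  exact le_of_mul_le_mul_right this hxx

lemma abs_sub_le_specNorm (h : IsEigenPairs G lam u) (hm : Antitone lam)
    (h0 : IsEigenPairs G0 lam0 u0) (h0m : Antitone lam0) (i : Fin p) :
    |lam i - lam0 i| ≤ specNorm (G - G0) := by
  have hE : ∀ x, |x ⬝ᵥ ((G - G0) *ᵥ x)| ≤ specNorm (G - G0) * (x ⬝ᵥ x) :=
    abs_dotProduct_mulVec_le _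
  have hE' : ∀ x, x ⬝ᵥ ((G0 - G) *ᵥ x) ≤ specNorm (G - G0) * (x ⬝ᵥ x) := fun x => by
    rw [← neg_sub, Matrix.neg_mulVec, dotProduct_neg]
    exact (neg_le_abs _).trans (hE x)
  have := h.le_add_of_dotProduct_mulVec_sub_le hm h0 h0m (fun x => (le_abs_self _).trans (hE x)) i
  have := h0.le_add_of_dotProduct_mulVec_sub_le h0m h hm hE' i
  rw [abs_sub_le_iff]
  constructor <;> linarith

lemma sub_mul_dotProduct (hG0 : G0.IsSymm) (h0 : IsEigenPairs G0 lam0 u0) {μ : ℝ}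
    {v : Fin p → ℝ} (hv : G *ᵥ v = μ • v) (l : Fin p) :
    (μ - lam0 l) * (u0 l ⬝ᵥ v) = u0 l ⬝ᵥ ((G - G0) *ᵥ v) := by
  rw [Matrix.sub_mulVec, dotProduct_sub, hv, Matrix.dotProduct_mulVec, ← Matrix.mulVec_transpose,
    hG0.eq, h0.2, dotProduct_smul, smul_dotProduct, smul_eq_mul, smul_eq_mul]
  ring

theorem exists_sign_abs_mul_sub_le (hG0 : G0.IsSymm) (h0 : IsEigenPairs G0 lam0 u0)
    {T : Finset (Fin p)} (hzero : ∀ l ∉ T, lam0 l = 0) {k : Fin p} (hk : k ∈ T) {μ : ℝ}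
    {v : Fin p → ℝ} (hv : G *ᵥ v = μ • v) (hv1 : v ⬝ᵥ v = 1) {δ : ℝ} (hδ : 0 < δ)
    (hsep : ∀ l ≠ k, δ ≤ |μ - lam0 l|) (hμ : δ ≤ |μ|) :
    ∃ ω : ℝ, (ω = 1 ∨ ω = -1) ∧ ∀ j, |ω * v j - u0 k j| ≤
      3 / δ * (specNorm (G - G0) * ∑ l ∈ T, |u0 l j| + enorm fun i => (G - G0) j i) := by
  set ε := specNorm (G - G0)
  set e := (G - G0) *ᵥ v
  have hv1' : enorm v = 1 :=
    (pow_eq_one_iff_of_nonneg (enorm_nonneg v) two_ne_zero).mp (by rw [sq_enorm_eq_dotProduct, hv1])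
  have he : enorm e ≤ ε := by simpa [hv1'] using enorm_mulVec_le (G - G0) v
  have hcoef := h0.sub_mul_dotProduct hG0 hv
  have hw : ∀ l, |u0 l ⬝ᵥ e| ≤ ε := fun l =>
    (abs_apply_le_enorm (fun l => u0 l ⬝ᵥ e) l).trans (by rwa [h0.1.enorm_dotProduct])
  have hfar : ∀ l ≠ k, δ * |u0 l ⬝ᵥ v| ≤ |u0 l ⬝ᵥ e| := fun l hl => by
    rw [← hcoef, abs_mul]
    exact mul_le_mul_of_nonneg_right (hsep l hl) (abs_nonneg _)
  have hker : ∀ l ∉ T, μ * (u0 l ⬝ᵥ v) = u0 l ⬝ᵥ e := fun l hl => by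
    simpa [hzero l hl] using hcoef l
  have hsign : |(1 - |u0 k ⬝ᵥ v|)| ≤ ε / δ :=
    abs_one_sub_abs_le_of_sum_sq (c := fun l => u0 l ⬝ᵥ v) (w := fun l => u0 l ⬝ᵥ e) hδ
      (specNorm_nonneg _) (by rw [h0.1.sum_sq_dotProduct, hv1])
      (by rw [h0.1.sum_sq_dotProduct, ← sq_enorm_eq_dotProduct]; gcongr; exact enorm_nonneg e) hfar
  set c := u0 k ⬝ᵥ v
  refine ⟨if 0 ≤ c then 1 else -1, by split_ifs <;> simp, fun j => ?_⟩
  have hω : |(if 0 ≤ c then 1 else -1 : ℝ)| = 1 := by split_ifs <;> simp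
  have hωc : (if 0 ≤ c then 1 else -1) * c = |c| := by
    split_ifs with h
    · rw [one_mul, abs_of_nonneg h]
    · rw [neg_one_mul, abs_of_neg (not_le.mp h)]
  set R := enorm fun i => (G - G0) j i
  set S := ∑ l ∈ T, |u0 l j|
  have hej : |e j| ≤ R := (abs_dotProduct_le _ v).trans_eq (by rw [hv1', mul_one])
  have hkj : |u0 k j| ≤ S :=
    Finset.single_le_sum (f := fun l => |u0 l j|) (fun l _ => abs_nonneg _) hk
  calc _ ≤ |v j - c * u0 k j| + |(1 - |c|)| * |u0 k j| := abs_mul_sub_le_of_mul_eq_abs hω hωc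
    _ ≤ (2 * ε * S + |e j|) / δ + ε / δ * S := by
        gcongr
        · exact h0.1.abs_apply_sub_le hk hδ hμ hw hfar hker j
        · exact (abs_nonneg _).trans hsign
    _ = (3 * (ε * S) + |e j|) / δ := by ring
    _ ≤ 3 * (ε * S + R) / δ :=
        div_le_div_of_nonneg_right (by linarith [enorm_nonneg fun i => (G - G0) j i]) hδ.le
    _ = _ := by ring

end IsEigenPairs

theorem statement_5_general (a : ℝ) (ha0 : 0 < a) (K : ℕ) :
    ∃ C : ℝ, 0 < C ∧
      ∀ (p : ℕ) (hKp : K ≤ p) (G G0 : Matrix (Fin p) (Fin p) ℝ),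
        G.IsSymm → G0.IsSymm → G0.rank = K →
        ∀ (lam0 : Fin p → ℝ) (u0 : Fin p → Fin p → ℝ)
          (lam : Fin p → ℝ) (u : Fin p → Fin p → ℝ),
          IsEigenPairs G0 lam0 u0 → Antitone lam0 →
          IsEigenPairs G lam u → Antitone lam →
          (∀ k : Fin K, a * specNorm G0 ≤ |lam0 (Fin.castLE hKp k)|) →
          (∀ k : Fin K, ∀ h : (k : ℕ) + 1 < K,
            a * specNorm G0 ≤
              |lam0 (Fin.castLE hKp k) - lam0 ⟨(k : ℕ) + 1, lt_of_lt_of_le h hKp⟩|) →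
          specNorm (G - G0) ≤ (a / 2) * specNorm G0 →
          ∃ ω : Fin K → ℝ, (∀ k, ω k = 1 ∨ ω k = -1) ∧
            ∀ (j : Fin p) (k : Fin K),
              |ω k * u (Fin.castLE hKp k) j - u0 (Fin.castLE hKp k) j| ≤
                (C / specNorm G0) *
                  (specNorm (G - G0) * (∑ l : Fin K, |u0 (Fin.castLE hKp l) j|) +
                    enorm fun i => (G - G0) j i) := by
  refine ⟨6 / a, by positivity, ?_⟩
  intro p hKp G G0 _ hG0 hrank lam0 u0 lam u h0 h0m h hm hmag hgap hE
  have key (k : Fin K) : ∃ ω : ℝ, (ω = 1 ∨ ω = -1) ∧ ∀ j,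
      |ω * u (Fin.castLE hKp k) j - u0 (Fin.castLE hKp k) j| ≤
        3 / (a * specNorm G0 / 2) * (specNorm (G - G0) *
          ∑ l ∈ Finset.univ.map (Fin.castLEEmb hKp), |u0 l j| + enorm fun i => (G - G0) j i) := by
    have hb : 0 < a * specNorm G0 :=
      mul_pos ha0 (specNorm_pos fun hG00 => by simp [hG00, k.pos.ne] at hrank)
    have hzero : ∀ l : Fin p, K ≤ (l : ℕ) → lam0 l = 0 :=
      fun l => eq_zero_of_card_ne_zero_le hKp (h0.rank_eq_card ▸ hrank.le)
        (fun i => abs_pos.mp (hb.trans_le (hmag i)))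
    have hweyl := h.abs_sub_le_specNorm hm h0 h0m (Fin.castLE hKp k)
    refine h0.exists_sign_abs_mul_sub_le hG0 (fun l hl => hzero l ?_) (by simp) (h.2 _)
      ((h.1 _ _).trans (if_pos rfl)) (half_pos hb) (fun l hl => ?_) ?_
    · simp only [Finset.mem_map, Finset.mem_univ, true_and, Fin.coe_castLEEmb, not_exists] at hl
      exact not_lt.mp fun hlK => hl ⟨l, hlK⟩ rfl
    · exact half_le_abs_sub_of_le_abs_sub
        (le_abs_sub_of_consecutive_gaps hKp h0m hgap hmag hzero k hl) (by linarith)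
    · simpa using half_le_abs_sub_of_le_abs_sub (z := 0) (by simpa using hmag k) (by linarith)
  choose ω hω using key
  refine ⟨ω, fun k => (hω k).1, fun j k => ?_⟩
  convert (hω k).2 j using 1
  rw [Finset.sum_map]
  simp only [Fin.coe_castLEEmb]
  ring

/-- Lemma: element-wise eigenvector perturbation. -/
theorem statement_5 (a : ℝ) (ha0 : 0 < a) (ha1 : a < 1) (K : ℕ) :
    ∃ C : ℝ, 0 < C ∧
      ∀ (p : ℕ) (hKp : K ≤ p) (G G0 : Matrix (Fin p) (Fin p) ℝ),
        G.IsSymm → G0.IsSymm → G0.rank = K →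
        ∀ (lam0 : Fin p → ℝ) (u0 : Fin p → Fin p → ℝ)
          (lam : Fin p → ℝ) (u : Fin p → Fin p → ℝ),
          IsEigenPairs G0 lam0 u0 → Antitone lam0 →
          IsEigenPairs G lam u → Antitone lam →
          (∀ k : Fin K, a * specNorm G0 ≤ |lam0 (Fin.castLE hKp k)|) →
          (∀ k : Fin K, ∀ h : (k : ℕ) + 1 < K,
            a * specNorm G0 ≤
              |lam0 (Fin.castLE hKp k) - lam0 ⟨(k : ℕ) + 1, lt_of_lt_of_le h hKp⟩|) →
          specNorm (G - G0) ≤ (a / 2) * specNorm G0 →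
          ∃ ω : Fin K → ℝ, (∀ k, ω k = 1 ∨ ω k = -1) ∧
            ∀ (j : Fin p) (k : Fin K),
              |ω k * u (Fin.castLE hKp k) j - u0 (Fin.castLE hKp k) j| ≤
                (C / specNorm G0) *
                  (specNorm (G - G0) * (∑ l : Fin K, |u0 (Fin.castLE hKp l) j|) +
                    enorm fun i => (G - G0) j i) :=
  statement_5_general a ha0 K

end TopicModel
end
end

section
/- Coordinate bound on population eigenvectors. Under the pLSI model with regularity conditions (R1)–(R2) and min{N,p} ≥ log(n), N·h_min ≥ log²(n), let ξ_1,…,ξ_K be the K leading eigenvectors of G_0 = (1 − 1/N)·M_0^{-1/2}D_0D_0'M_0^{-1/2}. Then there exists a constant C > 0 such that Σ_{ℓ=1}^K |ξ_ℓ(j)| ≤ C√h_j for all 1 ≤ j ≤ p. -/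
noncomputable section
open Filter MeasureTheory ProbabilityTheory Matrix Finset Real
open scoped Classical

namespace TopicModel

/-! Write `G₀ = c_N B Bᵀ` with `c_N = 1 - 1/N` and `B = M₀^{-1/2} A W = T W`, where
`T = M₀^{-1/2} A`. Since `c₁ h_j ≤ M₀(j,j) ≤ h_j`, (R1) gives `λ_min(Tᵀ T) ≥ c₁`, and for
`x = T y` Cauchy–Schwarz yields `xᵀ G₀ x = c_N ‖Wᵀ (Tᵀ T) y‖² ≥ c_N n c₁² ‖x‖²`. By the min-max
principle on the `K`-dimensional range of `T`, the `K` leading eigenvalues are at least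
`c_N n c₁²`, while `Σ_ℓ λ_ℓ ξ_ℓ(j)² = G₀(j,j) ≤ c_N n h_j`; hence `|ξ_ℓ(j)| ≤ √h_j / c₁`. -/

section Spectral

variable {p : ℕ} {G : Matrix (Fin p) (Fin p) ℝ} {lam : Fin p → ℝ} {u : Fin p → Fin p → ℝ}

lemma OrthonormalRows.transpose_mul (hu : OrthonormalRows u) : (of u)ᵀ * of u = 1 := by
  refine mul_eq_one_comm.mp ?_
  ext k l
  simpa [Matrix.mul_apply, Matrix.one_apply] using hu k l

lemma OrthonormalRows.dotProduct_self (hu : OrthonormalRows u) (x : Fin p → ℝ) :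
    x ⬝ᵥ x = ∑ m, (u m ⬝ᵥ x) ^ 2 := by
  calc x ⬝ᵥ x = x ⬝ᵥ (((of u)ᵀ * of u) *ᵥ x) := by rw [hu.transpose_mul, one_mulVec]
    _ = (of u *ᵥ x) ⬝ᵥ (of u *ᵥ x) := by
      rw [← mulVec_mulVec, dotProduct_mulVec, vecMul_transpose]
    _ = ∑ m, (u m ⬝ᵥ x) ^ 2 := by simp only [dotProduct, sq]; rfl

lemma OrthonormalRows.abs_apply_le_one (hu : OrthonormalRows u) (m j : Fin p) :
    |u m j| ≤ 1 := by
  have h : u m j ^ 2 ≤ 1 := by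
    calc u m j ^ 2 ≤ ∑ i, u m i ^ 2 :=
          single_le_sum (f := fun i => u m i ^ 2) (fun i _ => sq_nonneg _) (mem_univ j)
      _ = 1 := by simpa [sq] using hu m m
  exact (sq_le_one_iff_abs_le_one _).mp h

lemma IsEigenPairs.mul_transpose (h : IsEigenPairs G lam u) :
    G * (of u)ᵀ = (of u)ᵀ * diagonal lam := by
  ext j m
  have := congrFun (h.2 m) j
  simp only [mulVec, dotProduct, Pi.smul_apply, smul_eq_mul] at this
  rw [Matrix.mul_diagonal, Matrix.mul_apply]
  simpa [mul_comm] using this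

lemma IsEigenPairs.dotProduct_mulVec (h : IsEigenPairs G lam u) (x : Fin p → ℝ) :
    x ⬝ᵥ (G *ᵥ x) = ∑ m, lam m * (u m ⬝ᵥ x) ^ 2 := by
  have hx : (of u)ᵀ *ᵥ (of u *ᵥ x) = x := by rw [mulVec_mulVec, h.1.transpose_mul, one_mulVec]
  calc x ⬝ᵥ (G *ᵥ x) = x ⬝ᵥ ((G * (of u)ᵀ) *ᵥ (of u *ᵥ x)) := by rw [← mulVec_mulVec, hx]
    _ = (of u *ᵥ x) ⬝ᵥ (diagonal lam *ᵥ (of u *ᵥ x)) := by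
      rw [h.mul_transpose, ← mulVec_mulVec, Matrix.dotProduct_mulVec, vecMul_transpose]
    _ = ∑ m, lam m * (u m ⬝ᵥ x) ^ 2 := by
      rw [dotProduct]
      simp only [mulVec_diagonal]
      exact sum_congr rfl fun m _ => by rw [show (of u *ᵥ x) m = u m ⬝ᵥ x from rfl]; ring

lemma IsEigenPairs.apply_self (h : IsEigenPairs G lam u) (j : Fin p) :
    G j j = ∑ m, lam m * u m j ^ 2 := by
  simpa using h.dotProduct_mulVec (Pi.single j 1)

lemma IsEigenPairs.eigenvalue_nonneg (h : IsEigenPairs G lam u)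
    (hG : ∀ x, 0 ≤ x ⬝ᵥ (G *ᵥ x)) (m : Fin p) : 0 ≤ lam m := by
  have hunit : u m ⬝ᵥ u m = 1 := by simpa [dotProduct] using h.1 m m
  simpa [h.2 m, hunit] using hG (u m)

lemma IsEigenPairs.mul_sq_apply_le (h : IsEigenPairs G lam u) (hlam : ∀ m, 0 ≤ lam m)
    (m j : Fin p) : lam m * u m j ^ 2 ≤ G j j := by
  rw [h.apply_self]
  exact single_le_sum (f := fun m => lam m * u m j ^ 2)
    (fun m _ => mul_nonneg (hlam m) (sq_nonneg _)) (mem_univ m)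

lemma IsEigenPairs.le_eigenvalue (h : IsEigenPairs G lam u) (hanti : Antitone lam)
    (S : Submodule ℝ (Fin p → ℝ)) (k : Fin p) (hk : (k : ℕ) < Module.finrank ℝ S) (t : ℝ)
    (ht : ∀ x ∈ S, t * (x ⬝ᵥ x) ≤ x ⬝ᵥ (G *ᵥ x)) : t ≤ lam k := by
  set F : Matrix (Fin k) (Fin p) ℝ := of fun m => u (Fin.castLE k.is_le' m)
  have hker : LinearMap.ker (F.mulVecLin ∘ₗ S.subtype) ≠ ⊥ :=
    LinearMap.ker_ne_bot_of_finrank_lt (by simpa using hk)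
  obtain ⟨⟨x, hxS⟩, hxker, hne⟩ := (Submodule.ne_bot_iff _).mp hker
  have hx0 : x ≠ 0 := fun hx => hne (by simp [hx])
  have hperp : ∀ m : Fin p, (m : ℕ) < k → u m ⬝ᵥ x = 0 := fun m hm =>
    congrFun (LinearMap.mem_ker.mp hxker) ⟨m, hm⟩
  have hpos : 0 < x ⬝ᵥ x := by
    refine lt_of_le_of_ne (sum_nonneg fun i _ => mul_self_nonneg _) fun heq => ?_
    exact hx0 (dotProduct_self_eq_zero.mp heq.symm)
  have hupper : x ⬝ᵥ (G *ᵥ x) ≤ lam k * (x ⬝ᵥ x) := by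
    rw [h.dotProduct_mulVec, h.1.dotProduct_self, mul_sum]
    refine sum_le_sum fun m _ => ?_
    rcases lt_or_ge (m : ℕ) k with hm | hm
    · simp [hperp m hm]
    · exact mul_le_mul_of_nonneg_right (hanti (Fin.le_def.mpr hm)) (sq_nonneg _)
  exact le_of_mul_le_mul_right ((ht x hxS).trans hupper) hpos

end Spectral

lemma inv_sqrt_mul_inv_sqrt {x : ℝ} (hx : 0 ≤ x) : (√x)⁻¹ * (√x)⁻¹ = x⁻¹ := by
  rw [← mul_inv, Real.mul_self_sqrt hx]

lemma dotProduct_mul_transpose_mulVec {p n : ℕ} (B : Matrix (Fin p) (Fin n) ℝ) (v : Fin p → ℝ) :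
    v ⬝ᵥ ((B * Bᵀ) *ᵥ v) = (Bᵀ *ᵥ v) ⬝ᵥ (Bᵀ *ᵥ v) := by
  rw [← mulVec_mulVec, Matrix.dotProduct_mulVec, ← mulVec_transpose]

lemma dotProduct_transpose_mul_diagonal_mul_mulVec {p K : ℕ} (B : Matrix (Fin p) (Fin K) ℝ)
    (d : Fin p → ℝ) (y : Fin K → ℝ) :
    y ⬝ᵥ ((Bᵀ * diagonal d * B) *ᵥ y) = ∑ j, d j * (B *ᵥ y) j ^ 2 := by
  rw [← mulVec_mulVec, ← mulVec_mulVec, Matrix.dotProduct_mulVec, vecMul_transpose]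
  simp only [mulVec_diagonal, dotProduct]
  exact sum_congr rfl fun j _ => by ring

lemma dotProduct_sigmaW_mulVec {K n : ℕ} (W : Matrix (Fin K) (Fin n) ℝ) (z : Fin K → ℝ) :
    z ⬝ᵥ (SigmaW W *ᵥ z) = (n : ℝ)⁻¹ * ((Wᵀ *ᵥ z) ⬝ᵥ (Wᵀ *ᵥ z)) := by
  rw [SigmaW, smul_mulVec, dotProduct_smul, dotProduct_mul_transpose_mulVec, smul_eq_mul]

namespace lamMinGe

variable {K : ℕ} {S : Matrix (Fin K) (Fin K) ℝ} {c : ℝ}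

lemma le_apply_self (h : lamMinGe S c) (k : Fin K) : c ≤ S k k := by
  simpa [Pi.single_apply] using h (Pi.single k 1)

lemma mul_dotProduct_le (hc : 0 ≤ c) (h : lamMinGe S c) (y : Fin K → ℝ) :
    c * (y ⬝ᵥ (S *ᵥ y)) ≤ (S *ᵥ y) ⬝ᵥ (S *ᵥ y) := by
  have hcs : (y ⬝ᵥ (S *ᵥ y)) ^ 2 ≤ (∑ k, y k ^ 2) * ((S *ᵥ y) ⬝ᵥ (S *ᵥ y)) := by
    simpa [dotProduct, sq] using sum_mul_sq_le_sq_mul_sq univ y (S *ᵥ y)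
  have hy := h y
  have hSy : 0 ≤ (S *ᵥ y) ⬝ᵥ (S *ᵥ y) := sum_nonneg fun k _ => mul_self_nonneg _
  rcases le_or_gt (y ⬝ᵥ (S *ᵥ y)) 0 with hq | hq
  · nlinarith
  · nlinarith [mul_le_mul_of_nonneg_right hy hSy]

lemma mono_diagonal {p : ℕ} {B : Matrix (Fin p) (Fin K) ℝ} {d d' : Fin p → ℝ}
    (h : lamMinGe (Bᵀ * diagonal d * B) c) (hd : ∀ j, d j ≤ d' j) :
    lamMinGe (Bᵀ * diagonal d' * B) c := fun y => by
  refine (h y).trans ?_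
  simp only [dotProduct_transpose_mul_diagonal_mul_mulVec]
  exact sum_le_sum fun j _ => mul_le_mul_of_nonneg_right (hd j) (sq_nonneg _)

lemma card_le_of_sigmaW {n : ℕ} {W : Matrix (Fin K) (Fin n) ℝ} (hc : 0 < c)
    (h : lamMinGe (SigmaW W) c) : K ≤ n := by
  by_contra! hnK
  have hker : LinearMap.ker Wᵀ.mulVecLin ≠ ⊥ :=
    LinearMap.ker_ne_bot_of_finrank_lt (by simpa using hnK)
  obtain ⟨y, hy, hy0⟩ := (Submodule.ne_bot_iff _).mp hker
  have hWy : Wᵀ *ᵥ y = 0 := LinearMap.mem_ker.mp hy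
  have hpos : 0 < ∑ k, y k ^ 2 := by
    obtain ⟨k, hk⟩ := Function.ne_iff.mp hy0
    exact sum_pos' (fun k _ => sq_nonneg _) ⟨k, mem_univ k, pow_two_pos_of_ne_zero hk⟩
  have := h y
  rw [dotProduct_sigmaW_mulVec, hWy, zero_dotProduct, mul_zero] at this
  nlinarith

lemma injective_mulVecLin {p : ℕ} {T : Matrix (Fin p) (Fin K) ℝ} (hc : 0 < c)
    (hT : lamMinGe (Tᵀ * T) c) : Function.Injective T.mulVecLin := by
  refine (injective_iff_map_eq_zero _).mpr fun y hy => ?_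
  have hTy : T *ᵥ y = 0 := hy
  have hle := hT y
  rw [← mulVec_mulVec, hTy, mulVec_zero, dotProduct_zero] at hle
  have hsum : ∑ k, y k ^ 2 = 0 :=
    le_antisymm (nonpos_of_mul_nonpos_right hle hc) (sum_nonneg fun k _ => sq_nonneg _)
  funext k
  exact pow_eq_zero_iff two_ne_zero |>.mp
    ((sum_eq_zero_iff_of_nonneg fun k _ => sq_nonneg (y k)).mp hsum k (mem_univ k))

end lamMinGe

lemma mul_sq_mul_dotProduct_le {p K n : ℕ} {c : ℝ} {T : Matrix (Fin p) (Fin K) ℝ}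
    {W : Matrix (Fin K) (Fin n) ℝ} (hc : 0 ≤ c) (hW : lamMinGe (SigmaW W) c)
    (hT : lamMinGe (Tᵀ * T) c) (y : Fin K → ℝ) :
    n * c ^ 2 * ((T *ᵥ y) ⬝ᵥ (T *ᵥ y)) ≤
      (T *ᵥ y) ⬝ᵥ ((T * W * (T * W)ᵀ) *ᵥ (T *ᵥ y)) := by
  set z := (Tᵀ * T) *ᵥ y
  have hnorm : (T *ᵥ y) ⬝ᵥ (T *ᵥ y) = y ⬝ᵥ z := by
    simpa using (dotProduct_mul_transpose_mulVec Tᵀ y).symm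
  have himage : (T * W)ᵀ *ᵥ (T *ᵥ y) = Wᵀ *ᵥ z := by
    simp only [z, transpose_mul, mulVec_mulVec, Matrix.mul_assoc]
  have hz : c * (z ⬝ᵥ z) ≤ z ⬝ᵥ (SigmaW W *ᵥ z) := by
    simpa [dotProduct, sq] using hW z
  have hn : (n : ℝ) * (z ⬝ᵥ (SigmaW W *ᵥ z)) ≤ (Wᵀ *ᵥ z) ⬝ᵥ (Wᵀ *ᵥ z) := by
    rw [dotProduct_sigmaW_mulVec, ← mul_assoc]
    exact mul_le_of_le_one_left (sum_nonneg fun i _ => mul_self_nonneg _) mul_inv_le_one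
  rw [dotProduct_mul_transpose_mulVec, himage, hnorm]
  calc n * c ^ 2 * (y ⬝ᵥ z) = n * c * (c * (y ⬝ᵥ z)) := by ring
    _ ≤ n * c * (z ⬝ᵥ z) := by gcongr; exact hT.mul_dotProduct_le hc y
    _ = n * (c * (z ⬝ᵥ z)) := by ring
    _ ≤ n * (z ⬝ᵥ (SigmaW W *ᵥ z)) := by gcongr
    _ ≤ (Wᵀ *ᵥ z) ⬝ᵥ (Wᵀ *ᵥ z) := hn

section Model

variable {p K n : ℕ} {A : Matrix (Fin p) (Fin K) ℝ} {W : Matrix (Fin K) (Fin n) ℝ} {c1 c2 : ℝ}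

lemma ColsProb.nonneg (hA : ColsProb A) (j : Fin p) (k : Fin K) : 0 ≤ A j k := (hA k).1 j

lemma ColsProb.le_one (hA : ColsProb A) (j : Fin p) (k : Fin K) : A j k ≤ 1 :=
  (single_le_sum (f := fun i => A i k) (fun i _ => hA.nonneg i k) (mem_univ j)).trans_eq (hA k).2

lemma ColsProb.rowL1_eq_sum (hA : ColsProb A) (j : Fin p) : rowL1 A j = ∑ k, A j k :=
  sum_congr rfl fun k _ => abs_of_nonneg (hA.nonneg j k)

lemma ColsProb.diagAvg_le_one (hW : ColsProb W) (k : Fin K) : diagAvg W k ≤ 1 := by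
  calc diagAvg W k ≤ (n : ℝ)⁻¹ * ∑ _i : Fin n, (1 : ℝ) :=
        mul_le_mul_of_nonneg_left (sum_le_sum fun i _ => hW.le_one k i) (by positivity)
    _ ≤ 1 := by simpa using inv_mul_le_one (a := (n : ℝ))

lemma lamMinGe.le_diagAvg (hW : ColsProb W) (hSW : lamMinGe (SigmaW W) c1) (k : Fin K) :
    c1 ≤ diagAvg W k := by
  refine (hSW.le_apply_self k).trans ?_
  simp only [SigmaW, Matrix.smul_apply, Matrix.mul_apply, transpose_apply, smul_eq_mul, diagAvg]
  gcongr with i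
  nlinarith [hW.nonneg k i, hW.le_one k i]

lemma diagAvg_mul (A : Matrix (Fin p) (Fin K) ℝ) (W : Matrix (Fin K) (Fin n) ℝ) (j : Fin p) :
    diagAvg (A * W) j = ∑ k, A j k * diagAvg W k := by
  simp only [diagAvg, Matrix.mul_apply, mul_sum]
  rw [sum_comm]
  exact sum_congr rfl fun k _ => sum_congr rfl fun i _ => by ring

lemma diagAvg_mul_le_rowL1 (hA : ColsProb A) (hW : ColsProb W) (j : Fin p) :
    diagAvg (A * W) j ≤ rowL1 A j := by
  rw [diagAvg_mul, hA.rowL1_eq_sum]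
  exact sum_le_sum fun k _ => mul_le_of_le_one_right (hA.nonneg j k) (hW.diagAvg_le_one k)

lemma mul_rowL1_le_diagAvg_mul (hA : ColsProb A) (hW : ColsProb W)
    (hSW : lamMinGe (SigmaW W) c1) (j : Fin p) : c1 * rowL1 A j ≤ diagAvg (A * W) j := by
  rw [diagAvg_mul, hA.rowL1_eq_sum, mul_sum]
  exact sum_le_sum fun k _ => by
    rw [mul_comm]; exact mul_le_mul_of_nonneg_left (hSW.le_diagAvg hW k) (hA.nonneg j k)

lemma mul_transpose_nrm_apply_self_le (hA : ColsProb A) (hW : ColsProb W) (j : Fin p)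
    (hM : 0 < diagAvg (A * W) j) :
    (nrm (A * W) (diagAvg (A * W)) * (nrm (A * W) (diagAvg (A * W)))ᵀ) j j ≤
      n * rowL1 A j := by
  set M := diagAvg (A * W) j
  have hn : (n : ℝ) ≠ 0 := fun h => by simp [M, diagAvg, h] at hM
  have hAW : ∀ i, 0 ≤ (A * W) j i ∧ (A * W) j i ≤ rowL1 A j := fun i => by
    rw [Matrix.mul_apply, hA.rowL1_eq_sum]
    exact ⟨sum_nonneg fun k _ => mul_nonneg (hA.nonneg j k) (hW.nonneg k i),
      sum_le_sum fun k _ => mul_le_of_le_one_right (hA.nonneg j k) (hW.le_one k i)⟩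
  have hsum : ∑ i, (A * W) j i = n * M := by simp [M, diagAvg, hn]
  calc (nrm (A * W) (diagAvg (A * W)) * (nrm (A * W) (diagAvg (A * W)))ᵀ) j j
        = (∑ i, (A * W) j i * (A * W) j i) / M := by
          rw [Matrix.mul_apply, div_eq_mul_inv, sum_mul]
          refine sum_congr rfl fun i _ => ?_
          rw [transpose_apply, show nrm (A * W) (diagAvg (A * W)) j i = (√M)⁻¹ * (A * W) j i
            from rfl, ← inv_sqrt_mul_inv_sqrt hM.le]
          ring
    _ ≤ (∑ i, rowL1 A j * (A * W) j i) / M :=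
          div_le_div_of_nonneg_right (sum_le_sum fun i _ =>
            mul_le_mul_of_nonneg_right (hAW i).2 (hAW i).1) hM.le
    _ = n * rowL1 A j := by rw [← mul_sum, hsum]; field_simp

lemma nrm_eq_diagonal_mul (D : Matrix (Fin p) (Fin n) ℝ) (m : Fin p → ℝ) :
    nrm D m = diagonal (fun j => (√(m j))⁻¹) * D := by
  ext j i
  simp [nrm, diagonal_mul]

lemma transpose_mul_self_diagonal_mul {m : Fin p → ℝ} (hm : ∀ j, 0 ≤ m j) :
    (diagonal (fun j => (√(m j))⁻¹) * A)ᵀ * (diagonal (fun j => (√(m j))⁻¹) * A) =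
      Aᵀ * diagonal (fun j => (m j)⁻¹) * A := by
  rw [transpose_mul, diagonal_transpose, Matrix.mul_assoc, ← Matrix.mul_assoc (diagonal _),
    diagonal_mul_diagonal, ← Matrix.mul_assoc]
  simp only [inv_sqrt_mul_inv_sqrt (hm _)]

end Model

section Regularity

variable {p K n : ℕ} {A : Matrix (Fin p) (Fin K) ℝ} {W : Matrix (Fin K) (Fin n) ℝ}
  {c1 c2 cN : ℝ} {lam : Fin p → ℝ} {u : Fin p → Fin p → ℝ}

lemma Reg12.diagAvg_pos (hreg : Reg12 A W c1 c2) (hc1 : 0 < c1) (j : Fin p) :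
    0 < diagAvg (A * W) j :=
  (mul_pos hc1 (hreg.2.2.1 j)).trans_le
    (mul_rowL1_le_diagAvg_mul hreg.1 hreg.2.1 hreg.2.2.2.1 j)

theorem Reg12.le_eigenvalue (hreg : Reg12 A W c1 c2) (hc1 : 0 < c1) (hcN : 0 ≤ cN)
    (h : IsEigenPairs
      (cN • (nrm (A * W) (diagAvg (A * W)) * (nrm (A * W) (diagAvg (A * W)))ᵀ)) lam u)
    (hanti : Antitone lam) (k : Fin p) (hk : (k : ℕ) < K) : cN * n * c1 ^ 2 ≤ lam k := by
  have hM := hreg.diagAvg_pos hc1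
  obtain ⟨hA, hW, -, hSW, hSA, -, -⟩ := hreg
  set T := diagonal (fun j => (√(diagAvg (A * W) j))⁻¹) * A
  have hT : lamMinGe (Tᵀ * T) c1 := by
    rw [transpose_mul_self_diagonal_mul fun j => (hM j).le]
    exact hSA.mono_diagonal fun j => inv_anti₀ (hM j) (diagAvg_mul_le_rowL1 hA hW j)
  have hB : nrm (A * W) (diagAvg (A * W)) = T * W := by
    rw [nrm_eq_diagonal_mul, Matrix.mul_assoc]
  refine h.le_eigenvalue hanti (LinearMap.range T.mulVecLin) k ?_ _ ?_
  · rwa [LinearMap.finrank_range_of_inj (hT.injective_mulVecLin hc1), Module.finrank_fin_fun]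
  · rintro _ ⟨y, rfl⟩
    rw [Matrix.mulVecLin_apply, hB, smul_mulVec, dotProduct_smul, smul_eq_mul]
    simpa only [mul_assoc] using
      mul_le_mul_of_nonneg_left (mul_sq_mul_dotProduct_le hc1.le hSW hT y) hcN

theorem Reg12.abs_eigenvector_apply_le (hreg : Reg12 A W c1 c2) (hc1 : 0 < c1) (hcN : 0 < cN)
    (h : IsEigenPairs
      (cN • (nrm (A * W) (diagAvg (A * W)) * (nrm (A * W) (diagAvg (A * W)))ᵀ)) lam u)
    (hanti : Antitone lam) (k : Fin p) (hk : (k : ℕ) < K) (j : Fin p) :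
    |u k j| ≤ √(rowL1 A j) / c1 := by
  have hn : (0 : ℝ) < n := by
    have := hreg.2.2.2.1.card_le_of_sigmaW hc1
    exact_mod_cast (by omega : 0 < n)
  have hG : ∀ x, 0 ≤ x ⬝ᵥ ((cN • (nrm (A * W) (diagAvg (A * W)) *
      (nrm (A * W) (diagAvg (A * W)))ᵀ)) *ᵥ x) := fun x => by
    rw [smul_mulVec, dotProduct_smul, dotProduct_mul_transpose_mulVec, smul_eq_mul]
    exact mul_nonneg hcN.le (sum_nonneg fun i _ => mul_self_nonneg _)
  have hdiag : lam k * u k j ^ 2 ≤ cN * (n * rowL1 A j) := by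
    refine (h.mul_sq_apply_le (h.eigenvalue_nonneg hG) k j).trans ?_
    rw [Matrix.smul_apply, smul_eq_mul]
    exact mul_le_mul_of_nonneg_left
      (mul_transpose_nrm_apply_self_le hreg.1 hreg.2.1 j (hreg.diagAvg_pos hc1 j)) hcN.le
  have hsq : (cN * n) * (c1 * u k j) ^ 2 ≤ (cN * n) * rowL1 A j := by
    calc (cN * n) * (c1 * u k j) ^ 2 = cN * n * c1 ^ 2 * u k j ^ 2 := by ring
      _ ≤ lam k * u k j ^ 2 := by gcongr; exact hreg.le_eigenvalue hc1 hcN.le h hanti k hk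
      _ ≤ (cN * n) * rowL1 A j := by linarith
  rw [le_div_iff₀ hc1, mul_comm, ← abs_of_pos hc1, ← abs_mul]
  exact Real.abs_le_sqrt (le_of_mul_le_mul_left hsq (by positivity))

lemma Reg12.log_two_le_sqrt_rowL1 (hreg : Reg12 A W c1 c2) (hc1 : 0 < c1) (hK : 2 ≤ K)
    (hlog : Real.log n ^ 2 ≤ ⨅ j, rowL1 A j) (j : Fin p) : Real.log 2 ≤ √(rowL1 A j) := by
  have hn : (2 : ℝ) ≤ n := by
    have := hreg.2.2.2.1.card_le_of_sigmaW hc1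
    exact_mod_cast (by omega : 2 ≤ n)
  refine Real.le_sqrt_of_sq_le ?_
  calc Real.log 2 ^ 2 ≤ Real.log n ^ 2 := by gcongr
    _ ≤ rowL1 A j := hlog.trans (ciInf_le (Finite.bddBelow_range _) j)

end Regularity

theorem statement_7_general (K : ℕ) (hK : 1 ≤ K) (c1 c2 : ℝ)
    (hc1 : 0 < c1) :
    ∃ C : ℝ, 0 < C ∧
      ∀ (p n N : ℕ) (hp : K + 1 ≤ p) (hn : 0 < n) (hN : 0 < N)
        (A : Matrix (Fin p) (Fin (K + 1)) ℝ) (W : Matrix (Fin (K + 1)) (Fin n) ℝ),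
        Reg12 A W c1 c2 →
        Real.log n ≤ min (N : ℝ) (p : ℝ) →
        (Real.log n) ^ 2 ≤ (N : ℝ) * (⨅ j, rowL1 A j) →
        ∀ xi : Fin (K + 1) → Fin p → ℝ,
          LeadingEigenvectors hp
            ((1 - (N : ℝ)⁻¹) •
              (nrm (A * W) (diagAvg (A * W)) * (nrm (A * W) (diagAvg (A * W)))ᵀ)) xi →
          ∀ j, ∑ l, |xi l j| ≤ C * Real.sqrt (rowL1 A j) := by
  have hlog2 : 0 < Real.log 2 := Real.log_pos one_lt_two
  refine ⟨(K + 1) / min c1 (Real.log 2), by positivity, ?_⟩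
  intro p n N hp _ _ A W hreg _ hlogsq xi ⟨lam, u, heig, hanti, hxi⟩ j
  suffices hcoord : ∀ l, |xi l j| ≤ √(rowL1 A j) / min c1 (Real.log 2) by
    calc ∑ l, |xi l j| ≤ ∑ _l : Fin (K + 1), √(rowL1 A j) / min c1 (Real.log 2) :=
          sum_le_sum fun l _ => hcoord l
      _ = _ := by simp; ring
  intro l
  rw [hxi l]
  rcases (show N = 1 ∨ 1 < N by omega) with rfl | hN1
  · -- `G₀ = 0` says nothing about its eigenvectors, but `h_j ≥ log² n` and `n ≥ K + 1 ≥ 2`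
    rw [Nat.cast_one, one_mul] at hlogsq
    calc |u (Fin.castLE hp l) j| ≤ 1 := heig.1.abs_apply_le_one _ _
      _ ≤ √(rowL1 A j) / Real.log 2 :=
        (one_le_div hlog2).mpr (hreg.log_two_le_sqrt_rowL1 hc1 (by omega) hlogsq j)
      _ ≤ _ :=
        div_le_div_of_nonneg_left (Real.sqrt_nonneg _) (lt_min hc1 hlog2) (min_le_right _ _)
  · have hcN : 0 < 1 - (N : ℝ)⁻¹ := sub_pos.mpr (inv_lt_one_of_one_lt₀ (by exact_mod_cast hN1))
    exact (hreg.abs_eigenvector_apply_le hc1 hcN heig hanti _ l.is_lt j).trans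
      (div_le_div_of_nonneg_left (Real.sqrt_nonneg _) (lt_min hc1 hlog2) (min_le_left _ _))

/-- Lemma: coordinate bound on the population eigenvectors. -/
theorem statement_7 (K : ℕ) (hK : 1 ≤ K) (c1 c2 : ℝ)
    (hc1 : 0 < c1) (hc1' : c1 < 1) (hc2 : 0 < c2) :
    ∃ C : ℝ, 0 < C ∧
      ∀ (p n N : ℕ) (hp : K + 1 ≤ p) (hn : 0 < n) (hN : 0 < N)
        (A : Matrix (Fin p) (Fin (K + 1)) ℝ) (W : Matrix (Fin (K + 1)) (Fin n) ℝ),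
        Reg12 A W c1 c2 →
        Real.log n ≤ min (N : ℝ) (p : ℝ) →
        (Real.log n) ^ 2 ≤ (N : ℝ) * (⨅ j, rowL1 A j) →
        ∀ xi : Fin (K + 1) → Fin p → ℝ,
          LeadingEigenvectors hp
            ((1 - (N : ℝ)⁻¹) •
              (nrm (A * W) (diagAvg (A * W)) * (nrm (A * W) (diagAvg (A * W)))ᵀ)) xi →
          ∀ j, ∑ l, |xi l j| ≤ C * Real.sqrt (rowL1 A j) :=
  statement_7_general K hK c1 c2 hc1

end TopicModel
end
end
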